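/- arXiv:1303.4905 — 3 statements merged into one kernel-verified Lean document; each statement's English description precedes it below -/
import Mathlib

section
/- For any directed graph G = (V_G, E_G) and any subset N ⊆ V_G, there exists a map M = (N, E_M) of G (i.e., E_M only contains pairs (x,y) with x,y ∈ N such that there is a path from x to y in G) that is good: M is complete, route-complete, and non-redundant. -/
/-- A nonempty directed path from `u` to `v` in the graph with edge relation `E`,
all of whose intermediate nodes avoid the set `N`. -/
inductive AvoidPath {V : Type*} (E : V → V → Prop) (N : Set V) : V → V → Prop
  | single {u v : V} : E u v → AvoidPath E N u v
  | cons {u w v : V} : E u w → w ∉ N → AvoidPath E N w v → AvoidPath E N u v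

/-- Edges of the good map of `(V, E)` over the distinguished node set `N`:
exactly the pairs `x, y ∈ N` with `x ↠_N y` in `G`. -/
def goodMapEdges {V : Type*} (E : V → V → Prop) (N : Set V) : V → V → Prop :=
  fun x y => x ∈ N ∧ y ∈ N ∧ AvoidPath E N x y

/-- The good map of `(V, E)` over `N`, as a pair (vertex set, edge relation). -/
def goodMap {V : Type*} (E : V → V → Prop) (N : Set V) : Set V × (V → V → Prop) :=
  (N, goodMapEdges E N)

/-- `M = (VM, EM)` is a map of `(V, E)`: its vertices lie in `V`, and every edge
`(x, y)` of `M` joins vertices of `M` connected by a directed path in `G`. -/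
def IsMap {V : Type*} (E : V → V → Prop) (VM : Set V) (EM : V → V → Prop) : Prop :=
  ∀ x y, EM x y → x ∈ VM ∧ y ∈ VM ∧ Relation.TransGen E x y

/-- `M` is complete: paths between map nodes in `G` imply paths in `M`. -/
def MapComplete {V : Type*} (E : V → V → Prop) (VM : Set V) (EM : V → V → Prop) : Prop :=
  ∀ x y, x ∈ VM → y ∈ VM → Relation.TransGen E x y → Relation.TransGen EM x y

/-- `M` is route-complete: `x ↠_{V_M} y` in `G` implies edge `(x,y)` in `M`. -/
def RouteComplete {V : Type*} (E : V → V → Prop) (VM : Set V) (EM : V → V → Prop) : Prop :=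
  ∀ x y, x ∈ VM → y ∈ VM → AvoidPath E VM x y → EM x y

/-- `M` is non-redundant: edge `(x,y)` in `M` implies `x ↠_{V_M} y` in `G`. -/
def NonRedundant {V : Type*} (E : V → V → Prop) (VM : Set V) (EM : V → V → Prop) : Prop :=
  ∀ x y, x ∈ VM → y ∈ VM → EM x y → AvoidPath E VM x y

/-- `M` is a good map: a map that is complete, route-complete and non-redundant. -/
def GoodMap {V : Type*} (E : V → V → Prop) (VM : Set V) (EM : V → V → Prop) : Prop :=
  IsMap E VM EM ∧ MapComplete E VM EM ∧ RouteComplete E VM EM ∧ NonRedundant E VM EM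


/-! The good map over `N` is forced: its edges must be exactly the pairs `x ↠_N y` of `N`.
It is complete because any path of `G` between nodes of `N` splits, at its visits to `N`,
into segments whose intermediate nodes avoid `N`, i.e. into edges of the map. -/

section

variable {V : Type*} {E : V → V → Prop} {N : Set V}

theorem AvoidPath.transGen {u v : V} (h : AvoidPath E N u v) : Relation.TransGen E u v := by
  induction h with
  | single e => exact .single e
  | cons e _ _ ih => exact .head e ih

theorem exists_avoidPath_reflTransGen_goodMapEdges {u v : V} (h : Relation.TransGen E u v)
    (hv : v ∈ N) : ∃ w ∈ N, AvoidPath E N u w ∧ Relation.ReflTransGen (goodMapEdges E N) w v := by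
  induction h using Relation.TransGen.head_induction_on with
  | single e => exact ⟨_, hv, .single e, .refl⟩
  | @head u w e _ ih =>
    obtain ⟨z, hz, hwz, hzv⟩ := ih
    by_cases hw : w ∈ N
    · exact ⟨w, hw, .single e, .head ⟨hw, hz, hwz⟩ hzv⟩
    · exact ⟨z, hz, .cons e hw hwz, hzv⟩

theorem isMap_goodMapEdges : IsMap E N (goodMapEdges E N) :=
  fun _ _ ⟨hx, hy, hxy⟩ => ⟨hx, hy, hxy.transGen⟩

theorem mapComplete_goodMapEdges : MapComplete E N (goodMapEdges E N) := by
  intro x y hx hy hxy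
  obtain ⟨w, hw, hxw, hwy⟩ := exists_avoidPath_reflTransGen_goodMapEdges hxy hy
  exact .head' ⟨hx, hw, hxw⟩ hwy

theorem routeComplete_goodMapEdges : RouteComplete E N (goodMapEdges E N) :=
  fun _ _ hx hy hxy => ⟨hx, hy, hxy⟩

theorem nonRedundant_goodMapEdges : NonRedundant E N (goodMapEdges E N) :=
  fun _ _ _ _ hxy => hxy.2.2

end

theorem exists_good_map (V : Type*) (E : V → V → Prop) (N : Set V) :
    ∃ EM : V → V → Prop, GoodMap E N EM :=
  ⟨goodMapEdges E N, isMap_goodMapEdges, mapComplete_goodMapEdges,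
    routeComplete_goodMapEdges, nonRedundant_goodMapEdges⟩
end

section
/- A map M = (V_M, E_M) of a directed graph G is good if and only if for all x,y ∈ V_M: (x,y) ∈ E_M ⟺ x ↠_{V_M} y in G (i.e., the edges of M are exactly the pairs connected in G by a path avoiding intermediate nodes of V_M). -/
/-! Cutting a path of `G` ending in `N` at its intermediate nodes in `N` splits it into an
`N`-avoiding path followed by edges of the good map; this gives completeness of any map whose
edges contain those of the good map. -/

theorem AvoidPath.exists_reflTransGen_goodMapEdges {V : Type*} {E : V → V → Prop} {N : Set V}
    {x y : V} (hy : y ∈ N) (h : Relation.TransGen E x y) :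
    ∃ w ∈ N, AvoidPath E N x w ∧ Relation.ReflTransGen (goodMapEdges E N) w y := by
  induction h using Relation.TransGen.head_induction_on with
  | single hxy => exact ⟨_, hy, .single hxy, .refl⟩
  | @head x w hxw _ ih =>
    obtain ⟨u, hu, hwu, hrest⟩ := ih
    by_cases hw : w ∈ N
    · exact ⟨w, hw, .single hxw, .head ⟨hw, hu, hwu⟩ hrest⟩
    · exact ⟨u, hu, .cons hxw hw hwu, hrest⟩

theorem transGen_goodMapEdges_of_transGen {V : Type*} {E : V → V → Prop} {N : Set V}
    {x y : V} (hx : x ∈ N) (hy : y ∈ N) (h : Relation.TransGen E x y) :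
    Relation.TransGen (goodMapEdges E N) x y := by
  obtain ⟨w, hw, hxw, hwy⟩ := AvoidPath.exists_reflTransGen_goodMapEdges hy h
  exact .head' ⟨hx, hw, hxw⟩ hwy

theorem MapComplete.of_goodMapEdges_le {V : Type*} {E : V → V → Prop} {VM : Set V}
    {EM : V → V → Prop} (h : ∀ x y, goodMapEdges E VM x y → EM x y) :
    MapComplete E VM EM :=
  fun _ _ hx hy hxy => Relation.TransGen.mono h _ _ (transGen_goodMapEdges_of_transGen hx hy hxy)

theorem good_iff_edges_eq_avoidPaths (V : Type*) (E : V → V → Prop)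
    (VM : Set V) (EM : V → V → Prop) (hM : IsMap E VM EM) :
    GoodMap E VM EM ↔ ∀ x y, x ∈ VM → y ∈ VM → (EM x y ↔ AvoidPath E VM x y) := by
  constructor
  · rintro ⟨-, -, hroute, hnonred⟩ x y hx hy
    exact ⟨hnonred x y hx hy, hroute x y hx hy⟩
  · intro h
    have hroute : RouteComplete E VM EM := fun x y hx hy => (h x y hx hy).2
    have hcomplete : MapComplete E VM EM :=
      .of_goodMapEdges_le fun x y ⟨hx, hy, hxy⟩ => hroute x y hx hy hxy
    exact ⟨hM, hcomplete, hroute, fun x y hx hy => (h x y hx hy).1⟩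
end

section
/- Let M₁ and M₂ be good maps of a directed graph G. Then the good map M₁ ⊓ M₂ of G over V_{M₁} ∩ V_{M₂} equals (V_{M₁} ∩ V_{M₂})*_{M₁} ∪ (V_{M₁} ∩ V_{M₂})*_{M₂}, where for a graph H and S ⊆ V_H, S*_H denotes the graph (S, {(x,y) : x ↠_S y in H}). In particular M₁ ⊓ M₂ can be computed from M₁ and M₂ alone, without access to G. -/
/-!
A path of `G` avoiding `S ⊆ N` between two nodes of `N` cuts at its intermediate `N`-nodes
into edges of the good map over `N`; these cut points lie outside `S`, so the pieces form a
path of the good map avoiding `S`. Conversely every edge of the good map over `N` expands into a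
path of `G` avoiding `N ⊇ S`. Hence the good map over `S` of the good map over `N` is the good
map of `G` over `S`, and `N₁ ∩ N₂` lies in both `N₁` and `N₂`.
-/

namespace AvoidPath

variable {V : Type*} {E : V → V → Prop} {S N : Set V} {a x w y : V}

lemma mono (hSN : S ⊆ N) (p : AvoidPath E N x y) : AvoidPath E S x y := by
  induction p with
  | single e => exact .single e
  | cons e hw _ ih => exact .cons e (fun hwS => hw (hSN hwS)) ih

lemma trans (p : AvoidPath E S x w) (hw : w ∉ S) (q : AvoidPath E S w y) :
    AvoidPath E S x y := by
  induction p with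
  | single e => exact .cons e hw q
  | cons e hw' _ ih => exact .cons e hw' (ih hw q)

lemma of_prefix_of_edge (pre : x = a ∨ x ∉ N ∧ AvoidPath E N a x) (e : E x w) :
    AvoidPath E N a w := by
  rcases pre with rfl | ⟨hx, p⟩
  · exact .single e
  · exact p.trans hx (.single e)

/-- The prefix `a ↠_N x` (or `a = x`) is the part of the path not yet cut at an `N`-node. -/
lemma lift_goodMap_of_prefix (p : AvoidPath E S x y) (hy : y ∈ N) (ha : a ∈ N)
    (pre : x = a ∨ x ∉ N ∧ AvoidPath E N a x) : AvoidPath (goodMapEdges E N) S a y := by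
  induction p generalizing a with
  | single e => exact .single ⟨ha, hy, of_prefix_of_edge pre e⟩
  | @cons x w y e hw _ ih =>
    by_cases hwN : w ∈ N
    · exact .cons ⟨ha, hwN, of_prefix_of_edge pre e⟩ hw (ih hy hwN (.inl rfl))
    · exact ih hy ha (.inr ⟨hwN, of_prefix_of_edge pre e⟩)

lemma lift_goodMap (p : AvoidPath E S x y) (hx : x ∈ N) (hy : y ∈ N) :
    AvoidPath (goodMapEdges E N) S x y :=
  p.lift_goodMap_of_prefix hy hx (.inl rfl)

lemma of_goodMap (hSN : S ⊆ N) (p : AvoidPath (goodMapEdges E N) S x y) :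
    AvoidPath E S x y := by
  induction p with
  | single e => exact e.2.2.mono hSN
  | cons e hw _ ih => exact (e.2.2.mono hSN).trans hw ih

end AvoidPath

lemma goodMapEdges_goodMapEdges {V : Type*} {E : V → V → Prop} {S N : Set V} (hSN : S ⊆ N) :
    goodMapEdges (goodMapEdges E N) S = goodMapEdges E S := by
  funext x y
  exact propext ⟨fun ⟨hx, hy, p⟩ => ⟨hx, hy, p.of_goodMap hSN⟩,
    fun ⟨hx, hy, p⟩ => ⟨hx, hy, p.lift_goodMap (hSN hx) (hSN hy)⟩⟩

theorem inf_goodMap_from_maps (V : Type*) (E : V → V → Prop) (N₁ N₂ : Set V) :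
    goodMapEdges E (N₁ ∩ N₂) =
      fun x y => goodMapEdges (goodMapEdges E N₁) (N₁ ∩ N₂) x y ∨
                 goodMapEdges (goodMapEdges E N₂) (N₁ ∩ N₂) x y := by
  rw [goodMapEdges_goodMapEdges Set.inter_subset_left,
    goodMapEdges_goodMapEdges Set.inter_subset_right]
  simp only [or_self]
end
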